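/- arXiv:2604.21141 — 5 statements merged into one kernel-verified Lean document; each statement's English description precedes it below -/
import Mathlib

section
/- Let K be a compact linearly ordered topological space and let G : K → ℝ be a regulated function, meaning that at every point x that is not left-isolated the left limit lim_{y↗x} G(y) exists, and at every point x that is not right-isolated we have lim_{y↘x} G(y) = G(x). Then for every ε > 0 there exists a step function S : K → ℝ (a function constant on each open interval of some finite division 0_K = s_0 < s_1 < ⋯ < s_n = 1_K) with sup_{x∈K} |G(x) − S(x)| < ε. -/
/-!
Call a division of `[⊥, b]` fine if `G` maps each of its open gaps into a ball of radius `ε`.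
The points `b` admitting a fine division contain `⊥`; their supremum `c` admits one too, since the
left limit of `G` at `c` controls a whole gap `(b, c)`, and `c = ⊤`, since right continuity at `c`
would otherwise allow a fine division beyond `c`. A step function taking the centre of the ball on
each gap of a fine division of `[⊥, ⊤]`, and the value of `G` at the division points, is `ε`-close
to `G`.
-/

open Filter Topology

/-- A step function on a compact line `K` with minimum `⊥` and maximum `⊤`:
there is a finite division `⊥ = s 0 ≤ s 1 ≤ ⋯ ≤ s n = ⊤` such that the
function is constant on each open interval `(s k, s (k+1))`. -/
def IsStepFunction {K : Type*} [LinearOrder K] [OrderBot K] [OrderTop K]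
    (S : K → ℝ) : Prop :=
  ∃ (n : ℕ) (s : Fin (n + 1) → K), Monotone s ∧ s 0 = ⊥ ∧ s (Fin.last n) = ⊤ ∧
    ∀ i : Fin n, ∀ x ∈ Set.Ioo (s i.castSucc) (s i.succ),
      ∀ y ∈ Set.Ioo (s i.castSucc) (s i.succ), S x = S y

/-- `G : K → ℝ` is regulated: at every point that is not left-isolated the left
limit of `G` exists, and at every point that is not right-isolated `G` is
right-continuous. -/
def Regulated {K : Type*} [LinearOrder K] [TopologicalSpace K] (G : K → ℝ) : Prop :=
  (∀ x : K, (𝓝[<] x).NeBot → ∃ l : ℝ, Filter.Tendsto G (𝓝[<] x) (𝓝 l)) ∧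
  (∀ x : K, (𝓝[>] x).NeBot → Filter.Tendsto G (𝓝[>] x) (𝓝 (G x)))

open Set

section Division

variable {K : Type*} [Preorder K] [OrderBot K]

def HasDivision (P : Set K → Prop) (b : K) : Prop :=
  ∃ (n : ℕ) (s : Fin (n + 1) → K), Monotone s ∧ s 0 = ⊥ ∧ s (Fin.last n) = b ∧
    ∀ i : Fin n, P (Ioo (s i.castSucc) (s i.succ))

lemma hasDivision_bot (P : Set K → Prop) : HasDivision P ⊥ :=
  ⟨0, fun _ => ⊥, monotone_const, rfl, rfl, fun i => i.elim0⟩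

lemma HasDivision.snoc {P : Set K → Prop} {b u : K} (h : HasDivision P b) (hbu : b ≤ u)
    (hP : P (Ioo b u)) : HasDivision P u := by
  obtain ⟨n, s, hs, h0, hn, hsP⟩ := h
  refine ⟨n + 1, Fin.snoc s u, ?_, ?_, Fin.snoc_last _ _, ?_⟩
  · rw [Fin.monotone_iff_le_succ]
    intro i
    induction i using Fin.lastCases with
    | last => simpa only [Fin.succ_last, Fin.snoc_castSucc, Fin.snoc_last, hn] using hbu
    | cast j =>
      simpa only [Fin.succ_castSucc, Fin.snoc_castSucc] using hs Fin.castSucc_lt_succ.le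
  · simpa only [← Fin.castSucc_zero, Fin.snoc_castSucc] using h0
  · intro i
    induction i using Fin.lastCases with
    | last => simpa only [Fin.succ_last, Fin.snoc_last, Fin.snoc_castSucc, hn] using hP
    | cast j => simpa only [Fin.succ_castSucc, Fin.snoc_castSucc] using hsP j

end Division

lemma Monotone.pairwise_disjoint_on_Ioo_castSucc_succ {K : Type*} [Preorder K] {n : ℕ}
    {s : Fin (n + 1) → K} (hs : Monotone s) :
    Pairwise (Function.onFun Disjoint fun i : Fin n => Ioo (s i.castSucc) (s i.succ)) :=
  (pairwise_disjoint_on _).2 fun _ _ hij => disjoint_left.2 fun _ hi hj =>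
    ((hi.2.trans_le (hs (Fin.succ_le_castSucc_iff.2 hij))).trans hj.1).false

section CompactLine

variable {K : Type*} [LinearOrder K] [TopologicalSpace K] [OrderTopology K] [OrderBot K]
  {P : Set K → Prop}

lemma hasDivision_of_isLUB (hP : Antitone P) {c : K} (hc : IsLUB {b | HasDivision P b} c)
    (hlt : ∃ U ∈ 𝓝[<] c, P U) : HasDivision P c := by
  obtain rfl | hbot := eq_bot_or_bot_lt c
  · exact hasDivision_bot P
  obtain ⟨U, hU, hPU⟩ := hlt
  obtain ⟨a, hac, haU⟩ := (mem_nhdsLT_iff_exists_Ioo_subset' hbot).1 hU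
  obtain ⟨b, hb, hab, hbc⟩ := hc.exists_between hac
  exact hb.snoc hbc (hP ((Ioo_subset_Ioo_left hab.le).trans haU) hPU)

lemma hasDivision_top [CompactSpace K] [OrderTop K] (hP : Antitone P)
    (hlt : ∀ x, ∃ U ∈ 𝓝[<] x, P U) (hgt : ∀ x, ∃ U ∈ 𝓝[>] x, P U) : HasDivision P ⊤ := by
  obtain ⟨c, -, hc⟩ := isClosed_closure.isCompact.exists_isLUB
    ⟨⊥, subset_closure (show ⊥ ∈ {b | HasDivision P b} from hasDivision_bot P)⟩
  rw [isLUB_congr (upperBounds_closure _)] at hc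
  have hcP : HasDivision P c := hasDivision_of_isLUB hP hc (hlt c)
  obtain rfl | hctop := (le_top : c ≤ ⊤).eq_or_lt
  · exact hcP
  obtain ⟨U, hU, hPU⟩ := hgt c
  obtain ⟨u, hcu, huU⟩ := (mem_nhdsGT_iff_exists_Ioo_subset' hctop).1 hU
  exact absurd (hc.1 (hcP.snoc hcu.le (hP huU hPU))) hcu.not_ge

end CompactLine

lemma exists_isStepFunction_abs_sub_lt {K : Type*} [LinearOrder K] [OrderBot K] [OrderTop K]
    {G : K → ℝ} {ε : ℝ} (hε : 0 < ε)
    (h : HasDivision (fun I => ∃ c, MapsTo G I (Metric.ball c ε)) ⊤) :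
    ∃ S : K → ℝ, IsStepFunction S ∧ ∀ x, |G x - S x| < ε := by
  classical
  obtain ⟨n, s, hs, h0, hn, hsG⟩ := h
  choose c hc using hsG
  let S x := if h : ∃ i : Fin n, x ∈ Ioo (s i.castSucc) (s i.succ) then c h.choose else G x
  have hS : ∀ i, ∀ x ∈ Ioo (s i.castSucc) (s i.succ), S x = c i := by
    intro i x hx
    have h : ∃ i : Fin n, x ∈ Ioo (s i.castSucc) (s i.succ) := ⟨i, hx⟩
    simp only [S, dif_pos h]
    exact congrArg c <| hs.pairwise_disjoint_on_Ioo_castSucc_succ.eq <|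
      not_disjoint_iff.2 ⟨x, h.choose_spec, hx⟩
  refine ⟨S, ⟨n, s, hs, h0, hn, fun i x hx y hy => (hS i x hx).trans (hS i y hy).symm⟩,
    fun x => ?_⟩
  by_cases h : ∃ i : Fin n, x ∈ Ioo (s i.castSucc) (s i.succ)
  · obtain ⟨i, hx⟩ := h
    rw [hS i x hx, ← Real.dist_eq]
    exact hc i hx
  · rw [show S x = G x from dif_neg h, sub_self, abs_zero]
    exact hε

section Regulated

variable {K : Type*} [LinearOrder K] [TopologicalSpace K] {G : K → ℝ}

lemma Regulated.exists_tendsto_nhdsLT (hG : Regulated G) (x : K) :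
    ∃ l, Tendsto G (𝓝[<] x) (𝓝 l) := by
  by_cases h : (𝓝[<] x).NeBot
  · exact hG.1 x h
  · exact ⟨0, by simp [not_neBot.1 h]⟩

lemma Regulated.tendsto_nhdsGT (hG : Regulated G) (x : K) : Tendsto G (𝓝[>] x) (𝓝 (G x)) := by
  by_cases h : (𝓝[>] x).NeBot
  · exact hG.2 x h
  · simp [not_neBot.1 h]

end Regulated

theorem stmt2_general {K : Type*} [LinearOrder K] [TopologicalSpace K] [OrderTopology K]
    [CompactSpace K] [OrderBot K] [OrderTop K]
    (G : K → ℝ) (hG : Regulated G) :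
    ∀ ε : ℝ, 0 < ε → ∃ S : K → ℝ, IsStepFunction S ∧ ∀ x : K, |G x - S x| < ε := by
  intro ε hε
  refine exists_isStepFunction_abs_sub_lt hε (hasDivision_top ?_ (fun x => ?_) (fun x => ?_))
  · rintro I J hIJ ⟨c, hc⟩
    exact ⟨c, hc.mono_left hIJ⟩
  · obtain ⟨l, hl⟩ := hG.exists_tendsto_nhdsLT x
    exact ⟨_, hl (Metric.ball_mem_nhds l hε), l, mapsTo_preimage _ _⟩
  · exact ⟨_, hG.tendsto_nhdsGT x (Metric.ball_mem_nhds _ hε), G x, mapsTo_preimage _ _⟩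

/-- A regulated function on a compact line can be uniformly approximated by
step functions: for every `ε > 0` there is a step function `S` with
`|G x − S x| < ε` for every `x`. -/
theorem stmt2 {K : Type*} [LinearOrder K] [TopologicalSpace K] [OrderTopology K]
    [CompactSpace K] [Nonempty K] [OrderBot K] [OrderTop K]
    (G : K → ℝ) (hG : Regulated G) :
    ∀ ε : ℝ, 0 < ε → ∃ S : K → ℝ, IsStepFunction S ∧ ∀ x : K, |G x - S x| < ε :=
  stmt2_general G hG
end

section
/- Let K be a compact linearly ordered topological space and let G : K → ℝ be a regulated function. Then G is a uniform limit of step functions, and in particular G is Borel measurable. -/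
open Filter Topology

/-!
At each point `x` the one-sided limits of `G` give a neighbourhood `[a, b]` of `x` such that `G`
oscillates by less than `ε` on `(a, x)` and on `(x, b)`. Finitely many such neighbourhoods cover
`K`; then `G` oscillates by less than `ε` on every open gap of the finite set of all these
points `a`, `x`, `b`, so sampling `G` once in each gap gives a step function `ε`-close to `G`.
These step functions factor through a map into a finite type, hence are Borel measurable, and so
is their uniform limit `G`.
-/

open Set

section Gap

variable {K : Type*} [LinearOrder K]

/-- The fibres of `gapIndex T` are the points of `T` and the open gaps between consecutive
points of `T`. -/
def gapIndex (T : Finset K) (x : K) : T → Bool × Bool :=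
  fun r => (decide ((r : K) < x), decide (x < r))

theorem gapIndex_eq_iff {T : Finset K} {u v : K} :
    gapIndex T u = gapIndex T v ↔ ∀ r ∈ T, (r < u ↔ r < v) ∧ (u < r ↔ v < r) := by
  simp [gapIndex, funext_iff, Prod.ext_iff]

theorem eq_of_gapIndex_eq_of_mem {T : Finset K} {u v : K} (h : gapIndex T u = gapIndex T v)
    (hu : u ∈ T) : u = v := by
  have := gapIndex_eq_iff.mp h u hu
  exact le_antisymm (not_lt.mp (by simpa using this.2)) (not_lt.mp (by simpa using this.1))

theorem gapIndex_eq_of_mem_Ioo {T : Finset K} {p q u v : K} (hT : ∀ r ∈ T, r ≤ p ∨ q ≤ r)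
    (hu : u ∈ Ioo p q) (hv : v ∈ Ioo p q) : gapIndex T u = gapIndex T v := by
  refine gapIndex_eq_iff.mpr fun r hr => ?_
  rcases hT r hr with hrp | hqr
  · simp [hrp.trans_lt hu.1, hrp.trans_lt hv.1, (hrp.trans_lt hu.1).not_gt,
      (hrp.trans_lt hv.1).not_gt]
  · simp [hu.2.trans_le hqr, hv.2.trans_le hqr, (hu.2.trans_le hqr).not_gt,
      (hv.2.trans_le hqr).not_gt]

theorem measurable_gapIndex [TopologicalSpace K] [OrderClosedTopology K] [MeasurableSpace K]
    [OpensMeasurableSpace K] (T : Finset K) : Measurable (gapIndex T) := by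
  refine measurable_pi_lambda _ fun r => Measurable.prodMk ?_ ?_ <;>
    refine measurable_to_bool ?_ <;>
    simp only [preimage, mem_singleton_iff, decide_eq_true_eq]
  exacts [measurableSet_Ioi, measurableSet_Iio]

theorem isStepFunction_comp_gapIndex [OrderBot K] [OrderTop K] {T : Finset K} (hbot : ⊥ ∈ T)
    (htop : ⊤ ∈ T) (g : (T → Bool × Bool) → ℝ) : IsStepFunction (g ∘ gapIndex T) := by
  have hcard : T.card = T.card - 1 + 1 :=
    (Nat.sub_add_cancel (Finset.card_pos.mpr ⟨⊥, hbot⟩)).symm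
  set s := T.orderEmbOfFin hcard
  refine ⟨T.card - 1, s, s.monotone, ?_, ?_, fun i u hu v hv => ?_⟩
  · exact (Finset.orderEmbOfFin_zero hcard (Nat.succ_pos _)).trans
      (le_antisymm (Finset.min'_le _ _ hbot) bot_le)
  · exact (Finset.orderEmbOfFin_last hcard (Nat.succ_pos _)).trans
      (le_antisymm le_top (Finset.le_max' _ _ htop))
  · refine congrArg g (gapIndex_eq_of_mem_Ioo (fun r hr => ?_) hu hv)
    obtain ⟨j, rfl⟩ : r ∈ range s := by simpa [s, Finset.range_orderEmbOfFin] using hr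
    rcases le_or_gt j i.castSucc with h | h
    · exact Or.inl (s.monotone h)
    · exact Or.inr (s.monotone (Fin.castSucc_lt_iff_succ_le.mp h))

end Gap

theorem exists_Icc_mem_nhds_Ioo_subset {K : Type*} [LinearOrder K] [TopologicalSpace K]
    [OrderTopology K] {x : K} {s t : Set K} (hs : s ∈ 𝓝[<] x) (ht : t ∈ 𝓝[>] x) :
    ∃ a b, Icc a b ∈ 𝓝 x ∧ Ioo a x ⊆ s ∧ Ioo x b ⊆ t := by
  have hs' : s ∪ Ici x ∈ 𝓝 x := by
    rw [← nhdsLT_sup_nhdsGE]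
    exact ⟨mem_of_superset hs subset_union_left,
      mem_of_superset self_mem_nhdsWithin subset_union_right⟩
  have ht' : t ∪ Iic x ∈ 𝓝 x := by
    rw [← nhdsLE_sup_nhdsGT]
    exact ⟨mem_of_superset self_mem_nhdsWithin subset_union_right,
      mem_of_superset ht subset_union_left⟩
  obtain ⟨a, b, hx, hab, hsub⟩ := exists_Icc_mem_subset_of_mem_nhds (inter_mem hs' ht')
  refine ⟨a, b, hab, fun u hu => ?_, fun u hu => ?_⟩
  · exact ((hsub ⟨hu.1.le, hu.2.le.trans hx.2⟩).1).resolve_right hu.2.not_ge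
  · exact ((hsub ⟨hx.1.trans hu.1.le, hu.2.le⟩).2).resolve_right hu.1.not_ge

theorem exists_mem_dist_lt_of_tendsto {α : Type*} {l : Filter α} {G : α → ℝ} {c : ℝ}
    (h : Tendsto G l (𝓝 c)) {ε : ℝ} (hε : 0 < ε) :
    ∃ s ∈ l, ∀ u ∈ s, ∀ v ∈ s, dist (G u) (G v) < ε :=
  ⟨G ⁻¹' Metric.ball c (ε / 2), h (Metric.ball_mem_nhds c (half_pos hε)), fun _ hu _ hv =>
    (dist_triangle_right _ _ c).trans_lt (add_halves ε ▸ add_lt_add hu hv)⟩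

namespace Regulated

variable {K : Type*} [LinearOrder K] [TopologicalSpace K] {G : K → ℝ}

theorem exists_mem_nhdsLT_dist_lt (hG : Regulated G) (x : K) {ε : ℝ} (hε : 0 < ε) :
    ∃ s ∈ 𝓝[<] x, ∀ u ∈ s, ∀ v ∈ s, dist (G u) (G v) < ε := by
  by_cases hx : (𝓝[<] x).NeBot
  · obtain ⟨l, hl⟩ := hG.1 x hx
    exact exists_mem_dist_lt_of_tendsto hl hε
  · exact ⟨∅, by simp [not_neBot.mp hx], by simp⟩

theorem exists_mem_nhdsGT_dist_lt (hG : Regulated G) (x : K) {ε : ℝ} (hε : 0 < ε) :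
    ∃ s ∈ 𝓝[>] x, ∀ u ∈ s, ∀ v ∈ s, dist (G u) (G v) < ε := by
  by_cases hx : (𝓝[>] x).NeBot
  · exact exists_mem_dist_lt_of_tendsto (hG.2 x hx) hε
  · exact ⟨∅, by simp [not_neBot.mp hx], by simp⟩

variable [OrderTopology K]

theorem exists_Icc_mem_nhds_dist_lt (hG : Regulated G) (x : K) {ε : ℝ} (hε : 0 < ε) :
    ∃ a b, Icc a b ∈ 𝓝 x ∧ (∀ u ∈ Ioo a x, ∀ v ∈ Ioo a x, dist (G u) (G v) < ε) ∧
      ∀ u ∈ Ioo x b, ∀ v ∈ Ioo x b, dist (G u) (G v) < ε := by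
  obtain ⟨s, hs, hGs⟩ := hG.exists_mem_nhdsLT_dist_lt x hε
  obtain ⟨t, ht, hGt⟩ := hG.exists_mem_nhdsGT_dist_lt x hε
  obtain ⟨a, b, hab, has, hbt⟩ := exists_Icc_mem_nhds_Ioo_subset hs ht
  exact ⟨a, b, hab, fun u hu v hv => hGs u (has hu) v (has hv),
    fun u hu v hv => hGt u (hbt hu) v (hbt hv)⟩

theorem exists_finset_dist_lt_of_gapIndex_eq [CompactSpace K] [OrderBot K] [OrderTop K]
    (hG : Regulated G) {ε : ℝ} (hε : 0 < ε) :
    ∃ T : Finset K, ⊥ ∈ T ∧ ⊤ ∈ T ∧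
      ∀ u v, gapIndex T u = gapIndex T v → dist (G u) (G v) < ε := by
  choose a b hnhds hGa hGb using fun x => hG.exists_Icc_mem_nhds_dist_lt x hε
  obtain ⟨t, -, hcover⟩ := isCompact_univ.elim_nhds_subcover (fun x => Icc (a x) (b x))
    fun x _ => hnhds x
  set T : Finset K := {⊥, ⊤} ∪ t.biUnion fun x => {a x, x, b x}
  have hmemT : ∀ x ∈ t, a x ∈ T ∧ x ∈ T ∧ b x ∈ T := fun x hx => by
    refine ⟨?_, ?_, ?_⟩ <;>
      exact Finset.mem_union_right _ (Finset.mem_biUnion.mpr ⟨x, hx, by simp⟩)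
  refine ⟨T, by simp [T], by simp [T], fun u v huv => ?_⟩
  by_cases huT : u ∈ T
  · simp [← eq_of_gapIndex_eq_of_mem huv huT, hε]
  obtain ⟨x, hxt, hux⟩ := mem_iUnion₂.mp (hcover (mem_univ u))
  obtain ⟨haT, hxT, hbT⟩ := hmemT x hxt
  have hsep := gapIndex_eq_iff.mp huv
  rcases lt_trichotomy u x with hlt | rfl | hgt
  · have hau : a x < u := lt_of_le_of_ne hux.1 fun h => huT (h ▸ haT)
    exact hGa x u ⟨hau, hlt⟩ v ⟨((hsep _ haT).1.mp hau), (hsep _ hxT).2.mp hlt⟩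
  · exact absurd hxT huT
  · have hub : u < b x := lt_of_le_of_ne hux.2 fun h => huT (h ▸ hbT)
    exact hGb x u ⟨hgt, hub⟩ v ⟨(hsep _ hxT).1.mp hgt, (hsep _ hbT).2.mp hub⟩

theorem exists_isStepFunction_measurable_dist_lt [CompactSpace K] [OrderBot K] [OrderTop K]
    [MeasurableSpace K] [OpensMeasurableSpace K] (hG : Regulated G) {ε : ℝ} (hε : 0 < ε) :
    ∃ S : K → ℝ, IsStepFunction S ∧ Measurable S ∧ ∀ x, dist (G x) (S x) < ε := by
  have : Nonempty K := ⟨⊥⟩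
  obtain ⟨T, hbot, htop, hT⟩ := hG.exists_finset_dist_lt_of_gapIndex_eq hε
  set g := G ∘ Function.invFun (gapIndex T)
  refine ⟨g ∘ gapIndex T, isStepFunction_comp_gapIndex hbot htop g,
    (measurable_of_finite g).comp (measurable_gapIndex T), fun x => ?_⟩
  exact hT _ _ (Function.invFun_eq ⟨x, rfl⟩).symm

end Regulated

theorem stmt3_general {K : Type*} [LinearOrder K] [TopologicalSpace K] [OrderTopology K]
    [CompactSpace K] [OrderBot K] [OrderTop K]
    [MeasurableSpace K] [BorelSpace K]
    (G : K → ℝ) (hG : Regulated G) :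
    (∃ F : ℕ → K → ℝ, (∀ n, IsStepFunction (F n)) ∧
      TendstoUniformly F G Filter.atTop) ∧ Measurable G := by
  choose F hstep hmeas hdist using fun n : ℕ =>
    hG.exists_isStepFunction_measurable_dist_lt (Nat.one_div_pos_of_nat (n := n))
  have hF : TendstoUniformly F G atTop := Metric.tendstoUniformly_iff.mpr fun δ hδ =>
    (tendsto_one_div_add_atTop_nhds_zero_nat.eventually (gt_mem_nhds hδ)).mono
      fun n hn x => (hdist n x).trans hn
  exact ⟨⟨F, hstep, hF⟩, measurable_of_tendsto_metrizable hmeas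
    (tendsto_pi_nhds.mpr fun x => hF.tendsto_at x)⟩

/-- A regulated function on a compact line is the uniform limit of step
functions; in particular it is Borel measurable. -/
theorem stmt3 {K : Type*} [LinearOrder K] [TopologicalSpace K] [OrderTopology K]
    [CompactSpace K] [Nonempty K] [OrderBot K] [OrderTop K]
    [MeasurableSpace K] [BorelSpace K]
    (G : K → ℝ) (hG : Regulated G) :
    (∃ F : ℕ → K → ℝ, (∀ n, IsStepFunction (F n)) ∧
      TendstoUniformly F G Filter.atTop) ∧ Measurable G :=
  stmt3_general G hG
end

section
/- Let K be a compact linearly ordered topological space, G : K → ℝ nondecreasing, and x ∈ K such that G^{-1}({G(x)}) = [a, b] with a ≤ b. For each n ∈ ℕ let u_n(x) = sup{y < x : G(x) − G(y) ≥ 2^{-n}} (or 0_K if this set is empty). If a is left-dense (not the minimum and has no immediate predecessor), then the nondecreasing sequence (u_n(x))_n converges to a, i.e. sup_n u_n(x) = a and for every c < a there is n with u_n(x) ≥ c. If moreover G is continuous at a, then u_n(x) < a for every n. -/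
/-- Let `K` be a compact line with minimum `⊥`, `G : K → ℝ` nondecreasing and
`x ∈ K` with level set `G⁻¹({G x}) = [a, b]`, `a ≤ b`.  Let
`u n = sup {y | y < x ∧ G x − G y ≥ 2⁻ⁿ}` (or `⊥` if this set is empty).
If `a` is left-dense (`⊥ < a` and `a` has no immediate predecessor), then the
nondecreasing sequence `(u n)` converges to `a` from below: `u n ≤ a` for all
`n` and for every `c < a` there is `n` with `c ≤ u n`.  If moreover `G` is
continuous at `a`, then `u n < a` for every `n`. -/
theorem stmt6 {K : Type*} [LinearOrder K] [TopologicalSpace K] [OrderTopology K]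
    [CompactSpace K] [Nonempty K] [OrderBot K]
    (G : K → ℝ) (hG : Monotone G) (x a b : K) (hab : a ≤ b)
    (hlevel : G ⁻¹' {G x} = Set.Icc a b)
    (u : ℕ → K)
    (hu : ∀ n : ℕ,
      (({y : K | y < x ∧ (1 / 2 : ℝ) ^ n ≤ G x - G y}).Nonempty →
        IsLUB {y : K | y < x ∧ (1 / 2 : ℝ) ^ n ≤ G x - G y} (u n)) ∧
      ({y : K | y < x ∧ (1 / 2 : ℝ) ^ n ≤ G x - G y} = ∅ → u n = ⊥))
    (ha_pos : ⊥ < a) (ha_dense : ∀ c : K, c < a → ∃ y : K, c < y ∧ y < a) :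
    (∀ n : ℕ, u n ≤ a) ∧ (∀ c : K, c < a → ∃ n : ℕ, c ≤ u n) ∧
      (ContinuousAt G a → ∀ n : ℕ, u n < a) := by
  have hx : x ∈ Set.Icc a b := by rw [← hlevel]; exact rfl
  have hax : a ≤ x := hx.1
  have hGa : G a = G x := by
    have : a ∈ G ⁻¹' {G x} := by rw [hlevel]; exact ⟨le_refl a, hab⟩
    exact this
  have hpow : ∀ n : ℕ, (0:ℝ) < (1/2:ℝ)^n := fun n => pow_pos (by norm_num) n
  have hS : ∀ n : ℕ, ∀ y ∈ {y : K | y < x ∧ (1 / 2 : ℝ) ^ n ≤ G x - G y}, y < a := by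
    intro n y hy
    by_contra h
    push_neg at h
    have hyIcc : y ∈ Set.Icc a b := ⟨h, le_trans (le_of_lt hy.1) hx.2⟩
    rw [← hlevel] at hyIcc
    have hGy : G y = G x := hyIcc
    have h2 := hy.2
    rw [hGy] at h2
    linarith [hpow n]
  have h1 : ∀ n : ℕ, u n ≤ a := by
    intro n
    rcases Set.eq_empty_or_nonempty {y : K | y < x ∧ (1 / 2 : ℝ) ^ n ≤ G x - G y} with he | hne
    · rw [(hu n).2 he]; exact bot_le
    · exact ((hu n).1 hne).2 fun y hy => (hS n y hy).le
  refine ⟨h1, ?_, ?_⟩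
  · intro c hc
    obtain ⟨y, hcy, hya⟩ := ha_dense c hc
    have hyx : y < x := lt_of_lt_of_le hya hax
    have hGy : G y < G x := by
      rcases lt_or_eq_of_le (hG hyx.le) with h | h
      · exact h
      · exfalso
        have : y ∈ Set.Icc a b := by rw [← hlevel]; exact h
        exact absurd this.1 (not_le.mpr hya)
    obtain ⟨n, hn⟩ := exists_pow_lt_of_lt_one (by linarith : (0:ℝ) < G x - G y)
      (by norm_num : (1/2:ℝ) < 1)
    have hmem : y ∈ {y : K | y < x ∧ (1 / 2 : ℝ) ^ n ≤ G x - G y} := ⟨hyx, hn.le⟩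
    exact ⟨n, hcy.le.trans (((hu n).1 ⟨y, hmem⟩).1 hmem)⟩
  · intro hcont n
    rcases Set.eq_empty_or_nonempty {y : K | y < x ∧ (1 / 2 : ℝ) ^ n ≤ G x - G y} with he | hne
    · rw [(hu n).2 he]; exact ha_pos
    · have hlub := (hu n).1 hne
      rcases lt_or_eq_of_le (h1 n) with h | h
      · exact h
      exfalso
      have hnhds : {y : K | G a - (1/2:ℝ)^n < G y} ∈ nhds a :=
        hcont (Ioi_mem_nhds (by linarith [hpow n]))
      obtain ⟨l, hl, hsub⟩ := exists_Ioc_subset_of_mem_nhds hnhds ⟨⊥, ha_pos⟩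
      have : ∃ y ∈ {y : K | y < x ∧ (1 / 2 : ℝ) ^ n ≤ G x - G y}, l < y := by
        by_contra h'
        push_neg at h'
        exact absurd (hlub.2 h') (not_le.mpr (h ▸ hl))
      obtain ⟨y, hy, hly⟩ := this
      have hya : y < a := hS n y hy
      have := hsub ⟨hly, hya.le⟩
      have h2 := hy.2
      rw [← hGa] at h2
      simp only [Set.mem_setOf_eq] at this
      linarith
end

section
/- Let K be a compact linearly ordered topological space with a = 0_K or a = 1_K, and let G : K → ℝ be a nondecreasing function. Then either there exists a neighborhood V of a with V \ {a} ≠ ∅ such that G is constant on V \ {a}, or the point a admits a countable neighborhood basis. -/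
open Filter Topology

private theorem aux7 {K : Type*} [LinearOrder K] [TopologicalSpace K] [OrderTopology K]
    [Nonempty K]
    (G : K → ℝ) (hG : Monotone G) (a : K) (ha : IsBot a) :
    (∃ V ∈ 𝓝 a, (V \ {a}).Nonempty ∧
      ∀ x ∈ V \ {a}, ∀ y ∈ V \ {a}, G x = G y) ∨
    (𝓝 a).IsCountablyGenerated := by
  by_cases hiso : ({a} : Set K) ∈ 𝓝 a
  · right
    have h : 𝓝 a = pure a := le_antisymm (le_pure_iff.2 hiso) (pure_le_nhds a)
    rw [h]; infer_instance
  · have hne : (Set.Ioi a).Nonempty := by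
      rcases Set.eq_empty_or_nonempty (Set.Ioi a) with h | h
      · exfalso; apply hiso
        have huniv : ({a} : Set K) = Set.univ := by
          ext x
          simp only [Set.mem_singleton_iff, Set.mem_univ, iff_true]
          rcases lt_or_eq_of_le (ha x) with hlt | he
          · exact absurd hlt (Set.eq_empty_iff_forall_notMem.1 h x)
          · exact he.symm
        rw [huniv]; exact Filter.univ_mem
      · exact h
    have hbdd : BddBelow (Set.range fun x : Set.Ioi a => G x) := by
      refine ⟨G a, ?_⟩
      rintro _ ⟨x, rfl⟩
      exact hG (ha x)
    haveI : Nonempty (Set.Ioi a) := hne.to_subtype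
    set L := ⨅ x : Set.Ioi a, G x with hL
    have hLle : ∀ x ∈ Set.Ioi a, L ≤ G x := fun x hx => ciInf_le hbdd ⟨x, hx⟩
    by_cases hatt : ∃ c ∈ Set.Ioi a, G c = L
    · left
      obtain ⟨c, hc, hGc⟩ := hatt
      refine ⟨Set.Iic c, Filter.mem_of_superset (Iio_mem_nhds hc) Set.Iio_subset_Iic_self,
        ⟨c, ⟨le_refl c, fun h => absurd h.symm (ne_of_lt hc)⟩⟩, ?_⟩
      have key : ∀ x ∈ Set.Iic c \ {a}, G x = L := by
        rintro x ⟨hxc, hxa⟩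
        have hax : a < x := lt_of_le_of_ne (ha x) (Ne.symm hxa)
        exact le_antisymm (hGc ▸ hG hxc) (hLle x hax)
      intro x hx y hy
      rw [key x hx, key y hy]
    · have hx : ∀ n : ℕ, ∃ c : Set.Ioi a, G c < L + 1 / (n + 1) := by
        intro n
        refine exists_lt_of_ciInf_lt ?_
        rw [← hL]
        have : (0 : ℝ) < 1 / (n + 1) := by positivity
        linarith
      choose x hx2 using hx
      right
      have hbasis : (𝓝 a).HasBasis (fun _ : ℕ => True) (fun n => Set.Iio (x n : K)) := by
        constructor
        intro t
        constructor
        · intro ht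
          obtain ⟨b, hab, hsub⟩ := exists_Ico_subset_of_mem_nhds ht ⟨(x 0 : K), (x 0).2⟩
          rcases Set.eq_empty_or_nonempty (Set.Ioo a b) with h | ⟨c, hc⟩
          · exfalso; apply hiso
            have hIb : Set.Iio b = {a} := by
              ext y
              simp only [Set.mem_Iio, Set.mem_singleton_iff]
              constructor
              · intro hy
                by_contra hne'
                have hay : a < y := lt_of_le_of_ne (ha y) (Ne.symm hne')
                exact Set.eq_empty_iff_forall_notMem.1 h y ⟨hay, hy⟩
              · rintro rfl; exact hab
            exact hIb ▸ Iio_mem_nhds hab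
          · have hGc : L < G c :=
              lt_of_le_of_ne (hLle c hc.1) (fun h' => hatt ⟨c, hc.1, h'.symm⟩)
            obtain ⟨n, hn⟩ := exists_nat_one_div_lt (sub_pos.2 hGc)
            refine ⟨n, trivial, ?_⟩
            have hxc : (x n : K) < c := by
              by_contra hle
              push_neg at hle
              have := hG hle
              have h2 := hx2 n
              have : (1 : ℝ) / (n + 1) < G c - L := hn
              linarith
            intro y hy
            exact hsub ⟨ha y, lt_trans (lt_trans hy hxc) hc.2⟩
        · rintro ⟨n, -, hsub⟩
          exact Filter.mem_of_superset (Iio_mem_nhds (x n).2) hsub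
      exact hbasis.isCountablyGenerated

/-- Let `K` be a compact line and `a` its minimum or maximum.  If `G : K → ℝ`
is nondecreasing, then either there is a neighborhood `V` of `a` with
`V \ {a}` nonempty on which `G` is constant off `a`, or `a` has a countable
neighborhood basis. -/
theorem stmt7 {K : Type*} [LinearOrder K] [TopologicalSpace K] [OrderTopology K]
    [CompactSpace K] [Nonempty K]
    (G : K → ℝ) (hG : Monotone G) (a : K) (ha : IsBot a ∨ IsTop a) :
    (∃ V ∈ 𝓝 a, (V \ {a}).Nonempty ∧
      ∀ x ∈ V \ {a}, ∀ y ∈ V \ {a}, G x = G y) ∨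
    (𝓝 a).IsCountablyGenerated := by
  rcases ha with hbot | htop
  · exact aux7 G hG a hbot
  · have hdual := aux7 (K := Kᵒᵈ) (fun x => -G (OrderDual.ofDual x))
      (fun _ _ h => neg_le_neg (hG h)) (OrderDual.toDual a) htop.toDual
    rcases hdual with ⟨V, hV, hne, hconst⟩ | h
    · left
      exact ⟨V, hV, hne, fun x hx y hy => neg_injective (hconst x hx y hy)⟩
    · right; exact h
end

section
/- Let G : [0,1] → ℝ be defined by G(x) = ∫₀ˣ t·sin(1/t²) dt for x > 0 and G(0) = 0. Then G is of bounded variation on [0,1], and the function f : [0,1] → ℝ given by f(x) = 1/x² for x > 0 and f(0) = 0 is Henstock–Kurzweil–Stieltjes integrable with respect to G on [0,1] (equivalently, the improper integrals ∫_y¹ (sin(1/x²))/x dx converge as y ↘ 0), but the improper integral ∫₀¹ |sin(1/x²)|/x dx diverges, so f is not integrable with respect to the total variation function T_G(x) = ∫₀ˣ |t·sin(1/t²)| dt. -/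
/-!
Substituting `u = 1/x²` would turn these integrals into `½ ∫ sin u / u du`, which converges
but not absolutely. We integrate by parts instead: if `Φ' = φ` with `Φ` bounded, then
`d/dx [x² Φ(c/x²)] = 2x Φ(c/x²) - 2c φ(c/x²)/x`, so `∫_y^1 φ(c/x²)/x dx` differs from the
integral of the bounded function `x Φ(c/x²)/c` by the boundary term `x² Φ(c/x²)/(2c)`, which
tends to `0`. For divergence, `|sin| ≥ sin² = (1 - cos (2·))/2` splits off
`∫_y^1 dx/(2x) = -log y/2` from a convergent integral of the same kind.
-/

open Filter Topology MeasureTheory Set Real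

lemma integrableOn_Ioc_mul_of_abs_le {h : ℝ → ℝ} {a b C : ℝ} (hm : Measurable h)
    (hC : ∀ x, |h x| ≤ C) : IntegrableOn (fun x => x * h x) (Ioc a b) := by
  have hid : IntegrableOn (fun x : ℝ => x) (Ioc a b) :=
    continuous_id.integrableOn_Icc.mono_set Ioc_subset_Icc_self
  exact hid.mul_bdd hm.aestronglyMeasurable (ae_of_all _ hC)

lemma tendsto_intervalIntegral_nhdsGT {g : ℝ → ℝ} {a b : ℝ} (hab : a < b)
    (hg : IntegrableOn g (Ioc a b)) :
    Tendsto (fun y => ∫ x in y..b, g x) (𝓝[>] a) (𝓝 (∫ x in a..b, g x)) := by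
  have hcont := intervalIntegral.continuousOn_primitive_interval_left (μ := volume)
    (by rw [uIcc_of_le hab.le]; exact integrableOn_Icc_iff_integrableOn_Ioc (f := g) |>.2 hg)
  rw [uIcc_of_le hab.le] at hcont
  exact ((hcont a (left_mem_Icc.2 hab.le)).mono_of_mem_nhdsWithin (Icc_mem_nhdsGT hab)).tendsto

lemma intervalIntegral_eventuallyEq_setIntegral_Ioc {a b : ℝ} (hab : a < b) (f : ℝ → ℝ) :
    (fun y => ∫ x in y..b, f x) =ᶠ[𝓝[>] a] fun y => ∫ x in Ioc y b, f x := by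
  filter_upwards [Ioo_mem_nhdsGT hab] with y hy using intervalIntegral.integral_of_le hy.2.le

lemma tendsto_intervalIntegral_of_hasDerivAt_sub {F f g : ℝ → ℝ} {a b L : ℝ} (hab : a < b)
    (hF : ∀ x ∈ Ioc a b, HasDerivAt F (g x - f x) x) (hFa : Tendsto F (𝓝[>] a) (𝓝 L))
    (hf : ContinuousOn f (Ioc a b)) (hg : IntegrableOn g (Ioc a b)) :
    Tendsto (fun y => ∫ x in y..b, f x) (𝓝[>] a) (𝓝 ((∫ x in a..b, g x) - (F b - L))) := by
  have hFTC : ∀ y ∈ Ioo a b, ∫ x in y..b, f x = (∫ x in y..b, g x) - (F b - F y) := by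
    intro y ⟨hay, hyb⟩
    have hIcc : Icc y b ⊆ Ioc a b := Icc_subset_Ioc hay le_rfl
    have hfi : IntervalIntegrable f volume y b := (hf.mono hIcc).intervalIntegrable_of_Icc hyb.le
    have hgi : IntervalIntegrable g volume y b :=
      (intervalIntegrable_iff_integrableOn_Ioc_of_le hyb.le).2
        (hg.mono_set (Ioc_subset_Ioc_left hay.le))
    have h := intervalIntegral.integral_eq_sub_of_hasDerivAt
      (fun x hx => hF x (hIcc (uIcc_of_le hyb.le ▸ hx))) (hgi.sub hfi)
    rw [intervalIntegral.integral_sub hgi hfi] at h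
    linarith
  refine ((tendsto_intervalIntegral_nhdsGT hab hg).sub (tendsto_const_nhds.sub hFa)).congr' ?_
  filter_upwards [Ioo_mem_nhdsGT hab] with y hy
  exact (hFTC y hy).symm

lemma hasDerivAt_sq_mul_comp_const_div_sq {Φ φ : ℝ → ℝ} {c x : ℝ} (hc : c ≠ 0) (hx : x ≠ 0)
    (hΦ : HasDerivAt Φ (φ (c / x ^ 2)) (c / x ^ 2)) :
    HasDerivAt (fun x => x ^ 2 * (Φ (c / x ^ 2) / (2 * c)))
      (x * (Φ (c / x ^ 2) / c) - φ (c / x ^ 2) / x) x := by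
  have hinv : HasDerivAt (fun x => c / x ^ 2) (-(2 * c) / x ^ 3) x := by
    refine ((hasDerivAt_const x c).fun_div (hasDerivAt_pow 2 x) (pow_ne_zero 2 hx)).congr_deriv ?_
    field_simp
    ring
  refine ((hasDerivAt_pow 2 x).mul ((hΦ.comp x hinv).div_const (2 * c))).congr_deriv ?_
  simp only [Function.comp_apply]
  field_simp
  ring

theorem exists_tendsto_intervalIntegral_comp_const_div_sq_div {Φ φ : ℝ → ℝ} {c M : ℝ}
    (hc : c ≠ 0) (hΦ : ∀ u, HasDerivAt Φ (φ u) u) (hΦM : ∀ u, |Φ u| ≤ M) (hφ : Continuous φ) :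
    ∃ A, Tendsto (fun y => ∫ x in y..1, φ (c / x ^ 2) / x) (𝓝[>] 0) (𝓝 A) := by
  have hΦc : Continuous Φ := continuous_iff_continuousAt.2 fun u => (hΦ u).continuousAt
  have hF : Tendsto (fun x : ℝ => x ^ 2 * (Φ (c / x ^ 2) / (2 * c))) (𝓝[>] 0) (𝓝 0) := by
    refine Tendsto.zero_mul_isBoundedUnder_le ?_ (isBoundedUnder_of ⟨M / |2 * c|, fun u => ?_⟩)
    · exact tendsto_nhdsWithin_of_tendsto_nhds (by simpa using (continuous_pow 2).tendsto (0 : ℝ))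
    · simpa [abs_div] using div_le_div_of_nonneg_right (hΦM (c / u ^ 2)) (abs_nonneg (2 * c))
  have hf : ContinuousOn (fun x => φ (c / x ^ 2) / x) (Ioc 0 1) := by
    intro x hx
    have hx0 : x ≠ 0 := hx.1.ne'
    exact ContinuousAt.continuousWithinAt (by fun_prop (disch := simp [hx0]))
  have hg : IntegrableOn (fun x => x * (Φ (c / x ^ 2) / c)) (Ioc 0 1) :=
    integrableOn_Ioc_mul_of_abs_le (by fun_prop) fun u => by
      simpa [abs_div] using div_le_div_of_nonneg_right (hΦM (c / u ^ 2)) (abs_nonneg c)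
  exact ⟨_, tendsto_intervalIntegral_of_hasDerivAt_sub one_pos
    (fun x hx => hasDerivAt_sq_mul_comp_const_div_sq hc hx.1.ne' (hΦ _)) hF hf hg⟩

theorem tendsto_intervalIntegral_abs_sin_one_div_sq_div_atTop :
    Tendsto (fun y => ∫ x in y..1, |sin (1 / x ^ 2)| / x) (𝓝[>] 0) atTop := by
  obtain ⟨A, hA⟩ := exists_tendsto_intervalIntegral_comp_const_div_sq_div two_ne_zero
    hasDerivAt_sin abs_sin_le_one continuous_cos
  have hlog : Tendsto (fun y => -log y / 2) (𝓝[>] 0) atTop :=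
    (tendsto_neg_atTop_iff.2 tendsto_log_nhdsGT_zero).atTop_div_const two_pos
  refine tendsto_atTop_mono' _ ?_ (hlog.atTop_add (hA.div_const 2).neg)
  filter_upwards [Ioo_mem_nhdsGT one_pos] with y ⟨hy0, hy1⟩
  have hintegrable : ∀ f : ℝ → ℝ, (∀ x ≠ 0, ContinuousAt f x) → IntervalIntegrable f volume y 1 :=
    fun f hf => ContinuousOn.intervalIntegrable fun x hx =>
      (hf x (by rw [uIcc_of_le hy1.le] at hx; exact (hy0.trans_le hx.1).ne')).continuousWithinAt
  have hsin_sq : ∀ x : ℝ, sin (1 / x ^ 2) ^ 2 / x = (1 / x - cos (2 / x ^ 2) / x) / 2 := by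
    intro x
    rw [sin_sq_eq_half_sub]
    ring_nf
  calc -log y / 2 + -((∫ x in y..1, cos (2 / x ^ 2) / x) / 2)
      = ∫ x in y..1, sin (1 / x ^ 2) ^ 2 / x := by
        simp_rw [hsin_sq, intervalIntegral.integral_div]
        rw [intervalIntegral.integral_sub
          (hintegrable _ fun x hx => by fun_prop (disch := simp [hx]))
          (hintegrable _ fun x hx => by fun_prop (disch := simp [hx])),
          integral_one_div_of_pos hy0 one_pos, one_div, log_inv]
        ring
    _ ≤ ∫ x in y..1, |sin (1 / x ^ 2)| / x := by
        refine intervalIntegral.integral_mono_on hy1.le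
          (hintegrable _ fun x hx => by fun_prop (disch := simp [hx]))
          (hintegrable _ fun x hx => by fun_prop (disch := simp [hx])) fun x hx => ?_
        rw [← sq_abs]
        gcongr
        · exact (hy0.trans_le hx.1).le
        · exact pow_le_of_le_one (abs_nonneg _) (abs_sin_le_one _) two_ne_zero

/-- Key facts behind the example that the `G`-integral of `f(x) = 1/x²` with
respect to `G(x) = ∫₀ˣ t sin(1/t²) dt` exists while the integral with respect
to the variation function does not:
(1) `t ↦ t sin(1/t²)` is (absolutely) integrable on `(0,1]`, so `G` has bounded
variation;
(2) the improper integrals `∫_y¹ sin(1/x²)/x dx` converge to a finite limit as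
`y ↘ 0`, so `f` is `G`-integrable;
(3) `∫_y¹ |sin(1/x²)|/x dx → +∞` as `y ↘ 0`, so `f` is not `T_G`-integrable. -/
theorem stmt15 :
    MeasureTheory.IntegrableOn (fun t : ℝ => t * Real.sin (1 / t ^ 2))
      (Set.Ioc 0 1) ∧
    (∃ A : ℝ, Filter.Tendsto
      (fun y : ℝ => ∫ x in Set.Ioc y 1, Real.sin (1 / x ^ 2) / x)
      (𝓝[>] (0 : ℝ)) (𝓝 A)) ∧
    Filter.Tendsto
      (fun y : ℝ => ∫ x in Set.Ioc y 1, |Real.sin (1 / x ^ 2)| / x)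
      (𝓝[>] (0 : ℝ)) Filter.atTop := by
  refine ⟨integrableOn_Ioc_mul_of_abs_le (by fun_prop) fun t => abs_sin_le_one _, ?_,
    tendsto_intervalIntegral_abs_sin_one_div_sq_div_atTop.congr'
      (intervalIntegral_eventuallyEq_setIntegral_Ioc one_pos _)⟩
  obtain ⟨A, hA⟩ := exists_tendsto_intervalIntegral_comp_const_div_sq_div (φ := sin) one_ne_zero
    (fun u => (hasDerivAt_cos u).fun_neg.congr_deriv (neg_neg _))
    (fun u => (abs_neg (cos u)).trans_le (abs_cos_le_one u)) continuous_sin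
  exact ⟨A, hA.congr' (intervalIntegral_eventuallyEq_setIntegral_Ioc one_pos _)⟩
end
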